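/- arXiv:2310.08774 — 3 statements merged into one kernel-verified Lean document; each statement's English description precedes it below -/
import Mathlib

section
/- In a finite directed acyclic graph with a unique source s_0, a nonempty set of sinks X, and a strictly positive reward R on X, fixing any backward policy P_B (a family of full-support distributions over the parents of each non-source state), there exists a unique forward policy P_F (distributions over children of each non-sink state) and a unique positive scalar Z such that Z·∏_i P_F(s_{i+1}|s_i) = R(x)·P_B(τ|x) for every complete trajectory τ = (s_0 → ... → x); moreover at this solution Z = Σ_{x∈X} R(x) and the marginal probability of terminating at x under P_F equals R(x)/Z. -/
variable {S : Type}

/-- A terminal state (sink) of the DAG. -/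
def IsSink (adj : S → S → Prop) (x : S) : Prop := ∀ y, ¬ adj x y

/-- Product of transition probabilities along a list of states. -/
def fwdProd (P : S → S → ℝ) : List S → ℝ
  | a :: b :: rest => P a b * fwdProd P (b :: rest)
  | _ => 1

/-- `P_B(τ|x)`: product of backward transition probabilities along a trajectory,
where `PB s' s` is the probability of parent `s` given state `s'`. -/
def bwdProd (PB : S → S → ℝ) (L : List S) : ℝ := fwdProd (fun a b => PB b a) L

/-- A complete trajectory: starts at `s0`, follows edges, and ends at a sink. -/
def IsCompleteTraj (adj : S → S → Prop) (s0 : S) (L : List S) : Prop :=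
  L.head? = some s0 ∧ L.Chain' adj ∧ ∃ x, L.getLast? = some x ∧ IsSink adj x

def trajEnd (s0 : S) (L : List S) : S := L.getLast?.getD s0

/-- Marginal terminating probability at `x`: sum of `P_F(τ)` over complete trajectories
ending at `x`. -/
noncomputable def PFtop (adj : S → S → Prop) (s0 : S) (PF : S → S → ℝ) (x : S) : ℝ :=
  ∑ᶠ L ∈ {L : List S | IsCompleteTraj adj s0 L ∧ L.getLast? = some x}, fwdProd PF L

/-- A forward policy: distributions over children of non-sink states. -/
def IsFwdPolicy [Fintype S] (adj : S → S → Prop) (PF : S → S → ℝ) : Prop :=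
  (∀ s s', 0 ≤ PF s s') ∧ (∀ s s', ¬ adj s s' → PF s s' = 0) ∧
  (∀ s, ¬ IsSink adj s → ∑ s', PF s s' = 1)

/-- A backward policy: distributions over parents of non-initial states
(`PB s' s` = probability of parent `s` given `s'`). -/
def IsBwdPolicy [Fintype S] (adj : S → S → Prop) (s0 : S) (PB : S → S → ℝ) : Prop :=
  (∀ s s', 0 ≤ PB s' s) ∧ (∀ s s', ¬ adj s s' → PB s' s = 0) ∧
  (∀ s', s' ≠ s0 → ∑ s, PB s' s = 1)

def FullSupportBwd (adj : S → S → Prop) (PB : S → S → ℝ) : Prop :=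
  ∀ s s', adj s s' → 0 < PB s' s

/-!
Let `F(s)` be the sum of `R(x) · P_B(τ)` over the trajectories `τ` from `s` to a sink `x`.
Then `F = R` on sinks and `F(s) = Σ_{s'} P_B(s | s') F(s')` elsewhere, so
`P_F(s' | s) = F(s') P_B(s | s') / F(s)` is a forward policy in detailed balance with `P_B`, and
detailed balance telescopes to trajectory balance with `Z = F(s₀)`.

Conversely, let `(P_F, Z)` satisfy trajectory balance. Summing over the completions of a path `p`
from `s₀` to `s`, whose forward probabilities add up to one, gives `Z · P_F(p) = P_B(p) · F(s)`.
Taking `p = [s₀]`, and then extending `p` by one edge, yields `Z = F(s₀)` and the formula above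
for `P_F`. Finally `P_B` is a probability distribution on the paths from `s₀` to any state, which
gives `F(s₀) = Σ_x R(x)` and `P_F^⊤(x) = R(x) / Z`.
-/

def IsPath (adj : S → S → Prop) (a b : S) (L : List S) : Prop :=
  L.head? = some a ∧ L.IsChain adj ∧ L.getLast? = some b

def completeTrajs (adj : S → S → Prop) (s : S) : Set (List S) :=
  {L | IsCompleteTraj adj s L}

section Paths

variable {adj : S → S → Prop}

@[simp]
lemma isPath_singleton_iff {a b c : S} : IsPath adj a b [c] ↔ a = c ∧ b = c := by
  simp [IsPath, eq_comm]

@[simp]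
lemma isPath_cons_cons_iff {a b c d : S} {t : List S} :
    IsPath adj a b (c :: d :: t) ↔ a = c ∧ adj c d ∧ IsPath adj d b (d :: t) := by
  simp [IsPath, eq_comm, and_assoc]

lemma isPath_singleton (a : S) : IsPath adj a a [a] := by simp

lemma IsPath.append {a b c : S} {p q : List S} (hp : IsPath adj a b p) (hq : IsPath adj b c q) :
    IsPath adj a c (p ++ q.tail) := by
  obtain ⟨hph, hpc, hpl⟩ := hp
  obtain ⟨t, rfl⟩ := List.head?_eq_some_iff.mp hq.1
  obtain ⟨p, rfl⟩ := List.head?_eq_some_iff.mp hph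
  refine ⟨rfl, hpc.append (List.isChain_cons.mp hq.2.1).2 ?_, ?_⟩
  · simpa [hpl] using (List.isChain_cons.mp hq.2.1).1
  · cases t with
    | nil =>
      obtain rfl : b = c := by simpa using hq.2.2
      simpa using hpl
    | cons d t =>
      rw [List.tail_cons, List.getLast?_append_of_ne_nil _ (List.cons_ne_nil d t)]
      simpa using hq.2.2

lemma isPath_reverse_iff {a b : S} {L : List S} :
    IsPath adj a b L.reverse ↔ IsPath (flip adj) b a L := by
  simp only [IsPath, List.head?_reverse, List.getLast?_reverse, List.isChain_reverse]
  exact ⟨fun ⟨h1, h2, h3⟩ => ⟨h3, h2, h1⟩, fun ⟨h1, h2, h3⟩ => ⟨h3, h2, h1⟩⟩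

lemma exists_isPath_of_reflTransGen {a b : S} (h : Relation.ReflTransGen adj a b) :
    ∃ L, IsPath adj a b L := by
  obtain ⟨l, hc, hl⟩ := List.exists_isChain_cons_of_relationReflTransGen h
  exact ⟨a :: l, rfl, hc, by rw [List.getLast?_eq_some_getLast (List.cons_ne_nil a l), hl]⟩

lemma trajEnd_of_isPath {a b s : S} {L : List S} (h : IsPath adj a b L) : trajEnd s L = b := by
  simp [trajEnd, h.2.2]

lemma isCompleteTraj_iff {s : S} {L : List S} :
    IsCompleteTraj adj s L ↔ ∃ x, IsSink adj x ∧ IsPath adj s x L := by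
  simp only [IsCompleteTraj, IsPath, List.Chain']
  grind

end Paths

section Products

@[simp]
lemma fwdProd_singleton (P : S → S → ℝ) (a : S) : fwdProd P [a] = 1 := rfl

@[simp]
lemma fwdProd_pair (P : S → S → ℝ) (a b : S) : fwdProd P [a, b] = P a b := mul_one _

lemma fwdProd_cons_of_head? (P : S → S → ℝ) {a b : S} {L : List S} (h : L.head? = some b) :
    fwdProd P (a :: L) = P a b * fwdProd P L := by
  obtain ⟨t, rfl⟩ := List.head?_eq_some_iff.mp h
  rfl

lemma fwdProd_append_tail (P : S → S → ℝ) {s : S} :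
    ∀ {L M : List S}, L.getLast? = some s → M.head? = some s →
      fwdProd P (L ++ M.tail) = fwdProd P L * fwdProd P M
  | [], _, hL, _ => by simp at hL
  | [a], M, hL, hM => by
      obtain rfl : a = s := by simpa using hL
      obtain ⟨t, rfl⟩ := List.head?_eq_some_iff.mp hM
      simp
  | a :: b :: t, M, hL, hM => by
      rw [List.getLast?_cons_cons] at hL
      change P a b * fwdProd P ((b :: t) ++ M.tail) = P a b * fwdProd P (b :: t) * fwdProd P M
      rw [fwdProd_append_tail P hL hM, mul_assoc]

lemma fwdProd_reverse (P : S → S → ℝ) :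
    ∀ L : List S, fwdProd P L.reverse = fwdProd (flip P) L
  | [] | [_] => rfl
  | a :: b :: t => by
      have hlast : (b :: t).reverse.getLast? = some b := by simp
      calc fwdProd P (a :: b :: t).reverse
          = fwdProd P ((b :: t).reverse ++ [b, a].tail) := by rw [List.reverse_cons]; rfl
        _ = fwdProd (flip P) (b :: t) * P b a := by
          rw [fwdProd_append_tail P hlast rfl, fwdProd_reverse P (b :: t), fwdProd_pair]
        _ = fwdProd (flip P) (a :: b :: t) := mul_comm _ _

@[simp]
lemma bwdProd_singleton (PB : S → S → ℝ) (a : S) : bwdProd PB [a] = 1 := rfl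

@[simp]
lemma bwdProd_pair (PB : S → S → ℝ) (a b : S) : bwdProd PB [a, b] = PB b a := mul_one _

lemma bwdProd_cons_of_head? (PB : S → S → ℝ) {a b : S} {L : List S} (h : L.head? = some b) :
    bwdProd PB (a :: L) = PB b a * bwdProd PB L :=
  fwdProd_cons_of_head? _ h

lemma bwdProd_append_tail (PB : S → S → ℝ) {s : S} {L M : List S} (hL : L.getLast? = some s)
    (hM : M.head? = some s) : bwdProd PB (L ++ M.tail) = bwdProd PB L * bwdProd PB M :=
  fwdProd_append_tail _ hL hM

lemma bwdProd_eq_fwdProd_reverse (PB : S → S → ℝ) (L : List S) :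
    bwdProd PB L = fwdProd PB L.reverse :=
  (fwdProd_reverse PB L).symm

lemma fwdProd_pos {adj : S → S → Prop} {P : S → S → ℝ} (hP : ∀ a b, adj a b → 0 < P a b) :
    ∀ {L : List S}, L.IsChain adj → 0 < fwdProd P L
  | [], _ | [_], _ => one_pos
  | a :: b :: t, h => by
      rw [List.isChain_cons_cons] at h
      exact mul_pos (hP a b h.1) (fwdProd_pos hP h.2)

end Products

section Acyclic

variable {adj : S → S → Prop}

lemma List.IsChain.nodup_of_acyclic (hacyc : ∀ s, ¬ Relation.TransGen adj s s) {L : List S}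
    (hL : L.IsChain adj) : L.Nodup := by
  have : IsTrans S (Relation.TransGen adj) := ⟨fun _ _ _ => Relation.TransGen.trans⟩
  refine (List.isChain_iff_pairwise.mp (hL.imp fun _ _ => Relation.TransGen.single)).imp ?_
  rintro a b hab rfl
  exact hacyc a hab

lemma finite_setOf_isChain [Finite S] (hacyc : ∀ s, ¬ Relation.TransGen adj s s) :
    {L : List S | L.IsChain adj}.Finite := by
  have := Fintype.ofFinite S
  exact (List.finite_length_le S (Fintype.card S)).subset fun L hL =>
    (List.IsChain.nodup_of_acyclic hacyc hL).length_le_card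

lemma wellFounded_of_acyclic [Finite S] (hacyc : ∀ s, ¬ Relation.TransGen adj s s) :
    WellFounded adj :=
  have : IsTrans S (Relation.TransGen adj) := ⟨fun _ _ _ => Relation.TransGen.trans⟩
  have : Std.Irrefl (Relation.TransGen adj) := ⟨hacyc⟩
  Subrelation.wf Relation.TransGen.single (Finite.wellFounded_of_trans_of_irrefl _)

lemma acyclic_flip (hacyc : ∀ s, ¬ Relation.TransGen adj s s) :
    ∀ s, ¬ Relation.TransGen (flip adj) s s :=
  fun s h => hacyc s (Relation.transGen_swap.mp h)

lemma finite_completeTrajs [Finite S] (hacyc : ∀ s, ¬ Relation.TransGen adj s s) (s : S) :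
    (completeTrajs adj s).Finite :=
  (finite_setOf_isChain hacyc).subset fun _ hL => hL.2.1

lemma finite_setOf_isPath [Finite S] (hacyc : ∀ s, ¬ Relation.TransGen adj s s) (a b : S) :
    {L | IsPath adj a b L}.Finite :=
  (finite_setOf_isChain hacyc).subset fun _ hL => hL.2.1

end Acyclic

section CompleteTrajs

variable {adj : S → S → Prop}

lemma completeTrajs_of_isSink {x : S} (hx : IsSink adj x) : completeTrajs adj x = {[x]} := by
  ext L
  simp only [completeTrajs, Set.mem_ofPred_eq, Set.mem_singleton_iff, isCompleteTraj_iff]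
  constructor
  · rintro ⟨y, -, hL⟩
    match L, hL with
    | [_], hL => rw [(isPath_singleton_iff.mp hL).1]
    | _ :: b :: _, hL =>
      obtain ⟨rfl, hxb, -⟩ := isPath_cons_cons_iff.mp hL
      exact absurd hxb (hx b)
  · rintro rfl
    exact ⟨x, hx, isPath_singleton x⟩

lemma completeTrajs_eq_biUnion {s : S} (hs : ¬ IsSink adj s) :
    completeTrajs adj s = ⋃ s' ∈ {s' | adj s s'}, List.cons s '' completeTrajs adj s' := by
  ext L
  simp only [completeTrajs, Set.mem_ofPred_eq, Set.mem_iUnion, Set.mem_image, isCompleteTraj_iff,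
    exists_prop]
  constructor
  · rintro ⟨x, hx, hL⟩
    match L, hL with
    | [_], hL =>
      obtain ⟨rfl, rfl⟩ := isPath_singleton_iff.mp hL
      exact absurd hx hs
    | _ :: b :: t, hL =>
      obtain ⟨rfl, hsb, hbt⟩ := isPath_cons_cons_iff.mp hL
      exact ⟨b, hsb, b :: t, ⟨x, hx, hbt⟩, rfl⟩
  · rintro ⟨s', hss', M, ⟨x, hx, hM⟩, rfl⟩
    obtain ⟨t, rfl⟩ := List.head?_eq_some_iff.mp hM.1
    exact ⟨x, hx, isPath_cons_cons_iff.mpr ⟨rfl, hss', hM⟩⟩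

end CompleteTrajs

section Sums

variable [Fintype S] {adj : S → S → Prop}

lemma finsum_completeTrajs_eq_sum (hacyc : ∀ s, ¬ Relation.TransGen adj s s) {s : S}
    (hs : ¬ IsSink adj s) (f : S → List S → ℝ) (w : S → ℝ) (hw : ∀ s', ¬ adj s s' → w s' = 0)
    (hf : ∀ s', adj s s' → ∀ L ∈ completeTrajs adj s', f s (s :: L) = w s' * f s' L) :
    ∑ᶠ L ∈ completeTrajs adj s, f s L = ∑ s', w s' * ∑ᶠ L ∈ completeTrajs adj s', f s' L := by
  have hdisj :
      {s' | adj s s'}.PairwiseDisjoint fun s' => List.cons s '' completeTrajs adj s' := by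
    intro s₁ _ s₂ _ hne
    refine Set.disjoint_left.mpr ?_
    rintro _ ⟨L, hL, rfl⟩ ⟨M, hM, hML⟩
    obtain rfl : M = L := List.cons_injective hML
    exact hne (Option.some_injective S (hL.1.symm.trans hM.1))
  have hsupp : (Function.support fun s' => w s' * ∑ᶠ L ∈ completeTrajs adj s', f s' L) ⊆
      {s' | adj s s'} := fun s' hs' => by
    by_contra h
    exact hs' (by simp [hw s' h])
  calc ∑ᶠ L ∈ completeTrajs adj s, f s L
      = ∑ᶠ s' ∈ {s' | adj s s'}, ∑ᶠ L ∈ completeTrajs adj s', f s (s :: L) := by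
        rw [completeTrajs_eq_biUnion hs, finsum_mem_biUnion hdisj (Set.toFinite _)
          fun s' _ => (finite_completeTrajs hacyc s').image _]
        exact finsum_mem_congr rfl fun s' _ => finsum_mem_image List.cons_injective.injOn
    _ = ∑ᶠ s' ∈ {s' | adj s s'}, w s' * ∑ᶠ L ∈ completeTrajs adj s', f s' L :=
        finsum_mem_congr rfl fun s' hs' =>
          (finsum_mem_congr rfl (hf s' hs')).trans (mul_finsum_mem _ _).symm
    _ = ∑ s', w s' * ∑ᶠ L ∈ completeTrajs adj s', f s' L := by
        rw [finsum_mem_def, Set.indicator_eq_self.mpr hsupp, finsum_eq_sum_of_fintype]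

theorem finsum_fwdProd_completeTrajs (hacyc : ∀ s, ¬ Relation.TransGen adj s s)
    {P : S → S → ℝ} (hP0 : ∀ s s', ¬ adj s s' → P s s' = 0)
    (hP1 : ∀ s, ¬ IsSink adj s → ∑ s', P s s' = 1) (s : S) :
    ∑ᶠ L ∈ completeTrajs adj s, fwdProd P L = 1 := by
  induction s using (wellFounded_of_acyclic (acyclic_flip hacyc)).induction with
  | _ s ih =>
  by_cases hs : IsSink adj s
  · simp [completeTrajs_of_isSink hs]
  · rw [finsum_completeTrajs_eq_sum hacyc hs (fun _ => fwdProd P) (P s) (hP0 s)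
      fun s' _ L hL => fwdProd_cons_of_head? P hL.1, ← hP1 s hs]
    refine Finset.sum_congr rfl fun s' _ => ?_
    by_cases h : adj s s'
    · rw [ih s' h, mul_one]
    · rw [hP0 s s' h, zero_mul]

end Sums

section Backward

variable {adj : S → S → Prop} {s0 : S}

lemma isSink_flip_iff (hs0 : ∀ s, ¬ adj s s0) (hreach : ∀ s, Relation.ReflTransGen adj s0 s)
    {y : S} : IsSink (flip adj) y ↔ y = s0 := by
  refine ⟨fun hy => ?_, fun hy s => hy ▸ hs0 s⟩
  rcases (hreach y).cases_tail with h | ⟨u, -, hu⟩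
  · exact h
  · exact absurd hu (hy u)

lemma setOf_isPath_eq_image_reverse (hs0 : ∀ s, ¬ adj s s0)
    (hreach : ∀ s, Relation.ReflTransGen adj s0 s) (x : S) :
    {L | IsPath adj s0 x L} = List.reverse '' completeTrajs (flip adj) x := by
  ext L
  simp only [completeTrajs, Set.mem_ofPred_eq, Set.mem_image, isCompleteTraj_iff,
    isSink_flip_iff hs0 hreach]
  constructor
  · intro hL
    exact ⟨L.reverse, ⟨s0, rfl, isPath_reverse_iff.mp (by rwa [List.reverse_reverse])⟩,
      L.reverse_reverse⟩
  · rintro ⟨M, ⟨_, rfl, hM⟩, rfl⟩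
    exact isPath_reverse_iff.mpr hM

theorem finsum_bwdProd_isPath [Fintype S] (hacyc : ∀ s, ¬ Relation.TransGen adj s s)
    (hs0 : ∀ s, ¬ adj s s0) (hreach : ∀ s, Relation.ReflTransGen adj s0 s)
    {PB : S → S → ℝ} (hPB0 : ∀ s s', ¬ adj s s' → PB s' s = 0)
    (hPB1 : ∀ s', s' ≠ s0 → ∑ s, PB s' s = 1) (x : S) :
    ∑ᶠ L ∈ {L | IsPath adj s0 x L}, bwdProd PB L = 1 := by
  rw [setOf_isPath_eq_image_reverse hs0 hreach, finsum_mem_image List.reverse_injective.injOn]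
  simp_rw [bwdProd_eq_fwdProd_reverse, List.reverse_reverse]
  exact finsum_fwdProd_completeTrajs (acyclic_flip hacyc) (fun s s' h => hPB0 s' s h)
    (fun s hs => hPB1 s fun h => hs ((isSink_flip_iff hs0 hreach).mpr h)) x

end Backward

noncomputable def flow (adj : S → S → Prop) (PB : S → S → ℝ) (R : S → ℝ) (s : S) : ℝ :=
  ∑ᶠ L ∈ completeTrajs adj s, R (trajEnd s L) * bwdProd PB L

noncomputable def flowPolicy (PB : S → S → ℝ) (F : S → ℝ) : S → S → ℝ :=
  fun s s' => F s' * PB s' s / F s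

section Flow

variable {adj : S → S → Prop} {PB : S → S → ℝ} {R : S → ℝ}

lemma flow_of_isSink {x : S} (hx : IsSink adj x) : flow adj PB R x = R x := by
  simp [flow, completeTrajs_of_isSink hx, trajEnd, bwdProd]

lemma flow_eq_sum [Fintype S] (hacyc : ∀ s, ¬ Relation.TransGen adj s s)
    (hPB0 : ∀ s s', ¬ adj s s' → PB s' s = 0) {s : S} (hs : ¬ IsSink adj s) :
    flow adj PB R s = ∑ s', PB s' s * flow adj PB R s' := by
  refine finsum_completeTrajs_eq_sum hacyc hs (fun s L => R (trajEnd s L) * bwdProd PB L) _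
    (hPB0 s) fun s' hss' L hL => ?_
  obtain ⟨x, -, hxL⟩ := isCompleteTraj_iff.mp hL
  obtain ⟨t, rfl⟩ := List.head?_eq_some_iff.mp hxL.1
  have hsL : IsPath adj s x (s :: s' :: t) := isPath_cons_cons_iff.mpr ⟨rfl, hss', hxL⟩
  rw [trajEnd_of_isPath hsL, trajEnd_of_isPath hxL, bwdProd_cons_of_head? _ hxL.1]
  ring

lemma flow_pos [Finite S] (hacyc : ∀ s, ¬ Relation.TransGen adj s s)
    (hterm : ∀ s, ∃ x, Relation.ReflTransGen adj s x ∧ IsSink adj x)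
    (hR : ∀ x, IsSink adj x → 0 < R x) (hPBfull : FullSupportBwd adj PB) (s : S) :
    0 < flow adj PB R s := by
  have hterm_pos : ∀ L ∈ completeTrajs adj s, 0 < R (trajEnd s L) * bwdProd PB L := by
    intro L hL
    obtain ⟨x, hx, hxL⟩ := isCompleteTraj_iff.mp hL
    rw [trajEnd_of_isPath hxL]
    exact mul_pos (hR x hx) (fwdProd_pos hPBfull hxL.2.1)
  obtain ⟨x, hsx, hx⟩ := hterm s
  obtain ⟨L, hL⟩ := exists_isPath_of_reflTransGen hsx
  have hLmem : L ∈ completeTrajs adj s := isCompleteTraj_iff.mpr ⟨x, hx, hL⟩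
  exact finsum_cond_pos (fun L hL => (hterm_pos L hL).le) ⟨L, hLmem, hterm_pos L hLmem⟩
    ((finite_completeTrajs hacyc s).subset Set.inter_subset_right)

lemma isFwdPolicy_flowPolicy [Fintype S] {F : S → ℝ} (hF : ∀ s, 0 < F s)
    (hrec : ∀ s, ¬ IsSink adj s → F s = ∑ s', PB s' s * F s')
    (hPBnn : ∀ s s', 0 ≤ PB s' s) (hPB0 : ∀ s s', ¬ adj s s' → PB s' s = 0) :
    IsFwdPolicy adj (flowPolicy PB F) := by
  refine ⟨fun s s' => div_nonneg (mul_nonneg (hF s').le (hPBnn s s')) (hF s).le,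
    fun s s' h => by simp [flowPolicy, hPB0 s s' h], fun s hs => ?_⟩
  simp_rw [flowPolicy, ← Finset.sum_div, mul_comm (F _)]
  exact div_eq_one_iff_eq (hF s).ne' |>.mpr (hrec s hs).symm

lemma mul_flowPolicy {F : S → ℝ} {s : S} (hF : F s ≠ 0) (s' : S) :
    F s * flowPolicy PB F s s' = F s' * PB s' s :=
  mul_div_cancel₀ _ hF

lemma mul_fwdProd_eq_mul_bwdProd {F : S → ℝ} {PF : S → S → ℝ}
    (hbal : ∀ s s', adj s s' → F s * PF s s' = F s' * PB s' s) :
    ∀ {a b : S} {L : List S}, IsPath adj a b L → F a * fwdProd PF L = F b * bwdProd PB L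
  | _, _, [], hL => by simp [IsPath] at hL
  | _, _, [_], hL => by
      obtain ⟨rfl, rfl⟩ := isPath_singleton_iff.mp hL
      simp
  | c, b, _ :: d :: t, hL => by
      obtain ⟨rfl, hcd, hdt⟩ := isPath_cons_cons_iff.mp hL
      have ih := mul_fwdProd_eq_mul_bwdProd hbal hdt
      calc F c * (PF c d * fwdProd PF (d :: t))
          = PB d c * (F d * fwdProd PF (d :: t)) := by rw [← mul_assoc, hbal c d hcd]; ring
        _ = F b * (PB d c * bwdProd PB (d :: t)) := by rw [ih]; ring

end Flow

def TrajectoryBalance (adj : S → S → Prop) (s0 : S) (PB : S → S → ℝ) (R : S → ℝ)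
    (PF : S → S → ℝ) (Z : ℝ) : Prop :=
  ∀ L : List S, IsCompleteTraj adj s0 L → Z * fwdProd PF L = R (trajEnd s0 L) * bwdProd PB L

section TrajectoryBalance

variable {adj : S → S → Prop} {s0 : S} {PB PF : S → S → ℝ} {R : S → ℝ} {Z : ℝ}

lemma trajectoryBalance_flowPolicy [Finite S] (hacyc : ∀ s, ¬ Relation.TransGen adj s s)
    (hterm : ∀ s, ∃ x, Relation.ReflTransGen adj s x ∧ IsSink adj x)
    (hR : ∀ x, IsSink adj x → 0 < R x) (hPBfull : FullSupportBwd adj PB) :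
    TrajectoryBalance adj s0 PB R (flowPolicy PB (flow adj PB R)) (flow adj PB R s0) := by
  intro L hL
  obtain ⟨x, hx, hxL⟩ := isCompleteTraj_iff.mp hL
  have hbal : ∀ s s', adj s s' →
      flow adj PB R s * flowPolicy PB (flow adj PB R) s s' = flow adj PB R s' * PB s' s :=
    fun s s' _ => mul_flowPolicy (flow_pos hacyc hterm hR hPBfull s).ne' s'
  rw [mul_fwdProd_eq_mul_bwdProd hbal hxL, trajEnd_of_isPath hxL, flow_of_isSink hx]

lemma TrajectoryBalance.mul_fwdProd_eq [Fintype S] (hTB : TrajectoryBalance adj s0 PB R PF Z)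
    (hacyc : ∀ s, ¬ Relation.TransGen adj s s) (hPF : IsFwdPolicy adj PF)
    {s : S} {p : List S} (hp : IsPath adj s0 s p) :
    Z * fwdProd PF p = flow adj PB R s * bwdProd PB p := by
  calc Z * fwdProd PF p
      = ∑ᶠ q ∈ completeTrajs adj s, Z * fwdProd PF p * fwdProd PF q := by
        rw [← mul_finsum_mem, finsum_fwdProd_completeTrajs hacyc hPF.2.1 hPF.2.2, mul_one]
    _ = ∑ᶠ q ∈ completeTrajs adj s, R (trajEnd s q) * bwdProd PB q * bwdProd PB p := by
        refine finsum_mem_congr rfl fun q hq => ?_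
        obtain ⟨x, hx, hxq⟩ := isCompleteTraj_iff.mp hq
        have hpq := hp.append hxq
        have := hTB _ (isCompleteTraj_iff.mpr ⟨x, hx, hpq⟩)
        rw [trajEnd_of_isPath hpq, fwdProd_append_tail _ hp.2.2 hxq.1,
          bwdProd_append_tail _ hp.2.2 hxq.1] at this
        rw [trajEnd_of_isPath hxq]
        linear_combination this
    _ = flow adj PB R s * bwdProd PB p := by
        rw [flow, finsum_mem_mul]

theorem TrajectoryBalance.eq_flow [Fintype S] (hTB : TrajectoryBalance adj s0 PB R PF Z)
    (hacyc : ∀ s, ¬ Relation.TransGen adj s s) (hPF : IsFwdPolicy adj PF) :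
    Z = flow adj PB R s0 := by
  simpa using hTB.mul_fwdProd_eq hacyc hPF (isPath_singleton s0)

theorem TrajectoryBalance.eq_flowPolicy [Fintype S] (hTB : TrajectoryBalance adj s0 PB R PF Z)
    (hacyc : ∀ s, ¬ Relation.TransGen adj s s) (hreach : ∀ s, Relation.ReflTransGen adj s0 s)
    (hterm : ∀ s, ∃ x, Relation.ReflTransGen adj s x ∧ IsSink adj x)
    (hR : ∀ x, IsSink adj x → 0 < R x) (hPB0 : ∀ s s', ¬ adj s s' → PB s' s = 0)
    (hPBfull : FullSupportBwd adj PB) (hPF : IsFwdPolicy adj PF) :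
    PF = flowPolicy PB (flow adj PB R) := by
  funext s s'
  by_cases h : adj s s'
  · obtain ⟨p, hp⟩ := exists_isPath_of_reflTransGen (hreach s)
    have hedge : IsPath adj s s' [s, s'] := by simp [h]
    have hps := hTB.mul_fwdProd_eq hacyc hPF hp
    have hps' := hTB.mul_fwdProd_eq hacyc hPF (hp.append hedge)
    rw [fwdProd_append_tail _ hp.2.2 rfl, bwdProd_append_tail _ hp.2.2 rfl, fwdProd_pair,
      bwdProd_pair, ← mul_assoc, hps] at hps'
    have hp_pos : 0 < bwdProd PB p := fwdProd_pos hPBfull hp.2.1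
    rw [flowPolicy, eq_div_iff (flow_pos hacyc hterm hR hPBfull s).ne']
    refine mul_right_cancel₀ hp_pos.ne' ?_
    linear_combination hps'
  · simp [hPF.2.1 s s' h, flowPolicy, hPB0 s s' h]

lemma completeTrajs_eq_biUnion_isPath (s : S) :
    completeTrajs adj s = ⋃ x ∈ {x | IsSink adj x}, {L | IsPath adj s x L} := by
  ext L
  simp [completeTrajs, isCompleteTraj_iff]

theorem flow_source_eq_finsum [Fintype S] (hacyc : ∀ s, ¬ Relation.TransGen adj s s)
    (hs0 : ∀ s, ¬ adj s s0) (hreach : ∀ s, Relation.ReflTransGen adj s0 s)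
    (hPB : IsBwdPolicy adj s0 PB) :
    flow adj PB R s0 = ∑ᶠ x ∈ {x | IsSink adj x}, R x := by
  have hdisj : {x | IsSink adj x}.PairwiseDisjoint fun x => {L | IsPath adj s0 x L} :=
    fun x _ y _ hne => Set.disjoint_left.mpr fun L hx hy =>
      hne (Option.some_injective S (hx.2.2.symm.trans hy.2.2))
  rw [flow, completeTrajs_eq_biUnion_isPath, finsum_mem_biUnion hdisj (Set.toFinite _)
    fun x _ => finite_setOf_isPath hacyc s0 x]
  refine finsum_mem_congr rfl fun x _ => ?_
  calc ∑ᶠ L ∈ {L | IsPath adj s0 x L}, R (trajEnd s0 L) * bwdProd PB L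
      = ∑ᶠ L ∈ {L | IsPath adj s0 x L}, R x * bwdProd PB L :=
        finsum_mem_congr rfl fun L hL => by rw [trajEnd_of_isPath hL]
    _ = R x := by
        rw [← mul_finsum_mem, finsum_bwdProd_isPath hacyc hs0 hreach hPB.2.1 hPB.2.2, mul_one]

theorem TrajectoryBalance.PFtop_eq [Fintype S] (hTB : TrajectoryBalance adj s0 PB R PF Z)
    (hacyc : ∀ s, ¬ Relation.TransGen adj s s) (hs0 : ∀ s, ¬ adj s s0)
    (hreach : ∀ s, Relation.ReflTransGen adj s0 s) (hPB : IsBwdPolicy adj s0 PB) (hZ : 0 < Z)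
    {x : S} (hx : IsSink adj x) :
    PFtop adj s0 PF x = R x / Z := by
  have hset :
      {L | IsCompleteTraj adj s0 L ∧ L.getLast? = some x} = {L | IsPath adj s0 x L} := by
    ext L
    simp only [Set.mem_ofPred_eq, isCompleteTraj_iff]
    exact ⟨fun ⟨⟨_, _, hL⟩, hlast⟩ => ⟨hL.1, hL.2.1, hlast⟩, fun hL => ⟨⟨x, hx, hL⟩, hL.2.2⟩⟩
  calc PFtop adj s0 PF x
      = ∑ᶠ L ∈ {L | IsPath adj s0 x L}, R x / Z * bwdProd PB L := by
        rw [PFtop, hset]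
        refine finsum_mem_congr rfl fun L hL => ?_
        have := hTB L (isCompleteTraj_iff.mpr ⟨x, hx, hL⟩)
        rw [trajEnd_of_isPath hL] at this
        field_simp
        linear_combination this
    _ = R x / Z := by
        rw [← mul_finsum_mem, finsum_bwdProd_isPath hacyc hs0 hreach hPB.2.1 hPB.2.2, mul_one]

end TrajectoryBalance

theorem stmt4_general [Fintype S] (adj : S → S → Prop) (s0 : S)
    (hacyc : ∀ s, ¬ Relation.TransGen adj s s)
    (hs0 : ∀ s, ¬ adj s s0)
    (hreach : ∀ s, Relation.ReflTransGen adj s0 s)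
    (hterm : ∀ s, ∃ x, Relation.ReflTransGen adj s x ∧ IsSink adj x)
    (R : S → ℝ) (hR : ∀ x, IsSink adj x → 0 < R x)
    (PB : S → S → ℝ) (hPB : IsBwdPolicy adj s0 PB) (hPBfull : FullSupportBwd adj PB) :
    (∃! p : (S → S → ℝ) × ℝ, IsFwdPolicy adj p.1 ∧ 0 < p.2 ∧
        ∀ L : List S, IsCompleteTraj adj s0 L →
          p.2 * fwdProd p.1 L = R (trajEnd s0 L) * bwdProd PB L) ∧
    (∀ PF : S → S → ℝ, ∀ Z : ℝ, IsFwdPolicy adj PF → 0 < Z →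
        (∀ L : List S, IsCompleteTraj adj s0 L →
          Z * fwdProd PF L = R (trajEnd s0 L) * bwdProd PB L) →
        Z = (∑ᶠ x ∈ {x : S | IsSink adj x}, R x) ∧
        ∀ x, IsSink adj x → PFtop adj s0 PF x = R x / Z) := by
  have hflow_pos := flow_pos hacyc hterm hR hPBfull
  have hPF : IsFwdPolicy adj (flowPolicy PB (flow adj PB R)) :=
    isFwdPolicy_flowPolicy hflow_pos (fun _ hs => flow_eq_sum hacyc hPB.2.1 hs) hPB.1 hPB.2.1
  refine ⟨⟨(flowPolicy PB (flow adj PB R), flow adj PB R s0),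
    ⟨hPF, hflow_pos s0, trajectoryBalance_flowPolicy hacyc hterm hR hPBfull⟩, ?_⟩, ?_⟩
  · rintro ⟨PF, Z⟩ ⟨hPF', -, hTB : TrajectoryBalance adj s0 PB R PF Z⟩
    rw [hTB.eq_flow hacyc hPF', hTB.eq_flowPolicy hacyc hreach hterm hR hPB.2.1 hPBfull hPF']
  · intro PF Z hPF' hZ (hTB : TrajectoryBalance adj s0 PB R PF Z)
    exact ⟨(hTB.eq_flow hacyc hPF').trans (flow_source_eq_finsum hacyc hs0 hreach hPB),
      fun x hx => hTB.PFtop_eq hacyc hs0 hreach hPB hZ hx⟩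

/-- Trajectory balance: on a finite DAG with unique source `s0`, sinks `X`, positive reward
`R` on `X`, and a fixed full-support backward policy `P_B`, there is a unique pair of a
forward policy `P_F` and positive scalar `Z` with
`Z·∏ P_F = R(x)·P_B(τ|x)` for every complete trajectory; at this solution
`Z = Σ_{x∈X} R(x)` and the terminating distribution is `P_F^⊤(x) = R(x)/Z`. -/
theorem stmt4 [Fintype S] (adj : S → S → Prop) (s0 : S)
    (hacyc : ∀ s, ¬ Relation.TransGen adj s s)
    (hs0 : ∀ s, ¬ adj s s0)
    (hreach : ∀ s, Relation.ReflTransGen adj s0 s)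
    (hterm : ∀ s, ∃ x, Relation.ReflTransGen adj s x ∧ IsSink adj x)
    (hX : ∃ x, IsSink adj x)
    (R : S → ℝ) (hR : ∀ x, IsSink adj x → 0 < R x)
    (PB : S → S → ℝ) (hPB : IsBwdPolicy adj s0 PB) (hPBfull : FullSupportBwd adj PB) :
    (∃! p : (S → S → ℝ) × ℝ, IsFwdPolicy adj p.1 ∧ 0 < p.2 ∧
        ∀ L : List S, IsCompleteTraj adj s0 L →
          p.2 * fwdProd p.1 L = R (trajEnd s0 L) * bwdProd PB L) ∧
    (∀ PF : S → S → ℝ, ∀ Z : ℝ, IsFwdPolicy adj PF → 0 < Z →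
        (∀ L : List S, IsCompleteTraj adj s0 L →
          Z * fwdProd PF L = R (trajEnd s0 L) * bwdProd PB L) →
        Z = (∑ᶠ x ∈ {x : S | IsSink adj x}, R x) ∧
        ∀ x, IsSink adj x → PFtop adj s0 PF x = R x / Z) :=
  stmt4_general adj s0 hacyc hs0 hreach hterm R hR PB hPB hPBfull
end

section
/- Correctness of the single-site Fitch algorithm: for a rooted binary tree z with leaves labeled by characters from a finite alphabet Σ, define recursively at each internal node u with children v, w: F(u) = F(v) ∩ F(w) if this intersection is nonempty, else F(v) ∪ F(w); and M(u) = M(v) + M(w) + [F(v) ∩ F(w) = ∅], with F(leaf) = {its character} and M(leaf) = 0. Then M(root) equals the minimum over all assignments of characters to internal nodes of the number of edges whose endpoints receive different characters, and F(root) is exactly the set of root characters achieving this minimum. -/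
/-- Rooted binary trees with leaves labeled by characters of `σ`. -/
inductive BTree (σ : Type) where
  | leaf : σ → BTree σ
  | node : BTree σ → BTree σ → BTree σ

/-- Rooted binary trees of the same shape in which every node (including internal ones)
carries a character: internal character assignments. -/
inductive LTree (σ : Type) where
  | leaf : σ → LTree σ
  | node : σ → LTree σ → LTree σ → LTree σ

def LTree.rootChar {σ : Type} : LTree σ → σ
  | .leaf c => c
  | .node c _ _ => c

/-- `Extends e t`: the fully labeled tree `e` is an internal assignment extending the
leaf-labeled tree `t` (same shape, same leaf characters). -/
inductive Extends {σ : Type} : LTree σ → BTree σ → Prop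
  | leaf (c : σ) : Extends (.leaf c) (.leaf c)
  | node (c : σ) {a l b r} : Extends a l → Extends b r →
      Extends (.node c a b) (.node l r)

/-- Parsimony cost of an assignment: the number of edges whose endpoints receive
different characters. -/
def LTree.cost {σ : Type} [DecidableEq σ] : LTree σ → ℕ
  | .leaf _ => 0
  | .node c a b =>
      a.cost + b.cost + (if a.rootChar = c then 0 else 1) + (if b.rootChar = c then 0 else 1)

/-- Fitch character set. -/
def fitchF {σ : Type} [DecidableEq σ] : BTree σ → Finset σ
  | .leaf c => {c}
  | .node l r =>
      if (fitchF l ∩ fitchF r).Nonempty then fitchF l ∩ fitchF r else fitchF l ∪ fitchF r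

/-- Fitch parsimony score. -/
def fitchM {σ : Type} [DecidableEq σ] : BTree σ → ℕ
  | .leaf _ => 0
  | .node l r => fitchM l + fitchM r + (if (fitchF l ∩ fitchF r).Nonempty then 0 else 1)

/-! Hartigan's bound: an assignment with root character `c` costs at least
`fitchCost t c = fitchM t + [c ∉ fitchF t]`. Once the edges to the root are paid for, this bound is
subadditive over the two subtrees of a node, with equality when `c ∈ fitchF`: the first fact gives
the lower bound by induction on assignments, the second builds optimal assignments realizing every
character of `fitchF`. -/

section Hartigan

variable {σ : Type} [DecidableEq σ]

def fitchCost (t : BTree σ) (c : σ) : ℕ :=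
  fitchM t + if c ∈ fitchF t then 0 else 1

theorem fitchF_nonempty (t : BTree σ) : (fitchF t).Nonempty := by
  induction t with
  | leaf c => exact Finset.singleton_nonempty c
  | node l r ihl _ =>
    rw [fitchF]
    split_ifs with h
    · exact h
    · exact ihl.mono Finset.subset_union_left

theorem fitchM_le_fitchCost (t : BTree σ) (c : σ) : fitchM t ≤ fitchCost t c :=
  Nat.le_add_right _ _

theorem fitchCost_eq_fitchM_iff {t : BTree σ} {c : σ} :
    fitchCost t c = fitchM t ↔ c ∈ fitchF t := by
  unfold fitchCost
  split_ifs with h <;> simp [h]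

theorem fitchCost_le_fitchCost_add_ne (t : BTree σ) (a c : σ) :
    fitchCost t c ≤ fitchCost t a + if a = c then 0 else 1 := by
  by_cases hac : a = c
  · simp [hac]
  · unfold fitchCost
    split_ifs <;> omega

theorem fitchCost_node_le (l r : BTree σ) (c : σ) :
    fitchCost (.node l r) c ≤ fitchCost l c + fitchCost r c := by
  unfold fitchCost
  simp only [fitchM, fitchF]
  split_ifs <;> simp_all [Finset.Nonempty] <;> omega

theorem fitchCost_node_eq_of_mem {l r : BTree σ} {c : σ} (hc : c ∈ fitchF (.node l r)) :
    fitchCost l c + fitchCost r c = fitchM (.node l r) := by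
  unfold fitchCost
  simp only [fitchM]
  simp only [fitchF] at hc
  split_ifs at hc ⊢ <;> simp_all [Finset.Nonempty] <;> omega

theorem fitchCost_le_cost {e : LTree σ} {t : BTree σ} (he : Extends e t) :
    fitchCost t e.rootChar ≤ e.cost := by
  induction he with
  | leaf c => simp [fitchCost, fitchM, fitchF, LTree.cost, LTree.rootChar]
  | @node c a l b r _ _ iha ihb =>
    have hl := (fitchCost_le_fitchCost_add_ne l a.rootChar c).trans (Nat.add_le_add_right iha _)
    have hr := (fitchCost_le_fitchCost_add_ne r b.rootChar c).trans (Nat.add_le_add_right ihb _)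
    have := fitchCost_node_le l r c
    simp only [LTree.rootChar, LTree.cost] at *
    omega

theorem exists_extends_cost_add_ne_eq_fitchCost {t : BTree σ}
    (ht : ∀ d ∈ fitchF t, ∃ e : LTree σ, Extends e t ∧ e.rootChar = d ∧ e.cost = fitchM t)
    (c : σ) :
    ∃ e : LTree σ, Extends e t ∧ (e.cost + if e.rootChar = c then 0 else 1) = fitchCost t c := by
  by_cases hc : c ∈ fitchF t
  · obtain ⟨e, he, rfl, hcost⟩ := ht c hc
    exact ⟨e, he, by simp [fitchCost, hc, hcost]⟩
  · obtain ⟨d, hd⟩ := fitchF_nonempty t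
    obtain ⟨e, he, rfl, hcost⟩ := ht _ hd
    have hne : e.rootChar ≠ c := fun h => hc (h ▸ hd)
    exact ⟨e, he, by simp [fitchCost, hc, hcost, hne]⟩

theorem exists_extends_rootChar_cost_eq_fitchM {t : BTree σ} {c : σ} (hc : c ∈ fitchF t) :
    ∃ e : LTree σ, Extends e t ∧ e.rootChar = c ∧ e.cost = fitchM t := by
  induction t generalizing c with
  | leaf d =>
    obtain rfl : c = d := Finset.mem_singleton.mp hc
    exact ⟨.leaf c, .leaf c, rfl, rfl⟩
  | node l r ihl ihr =>
    obtain ⟨a, ha, hal⟩ := exists_extends_cost_add_ne_eq_fitchCost (fun _ => ihl) c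
    obtain ⟨b, hb, hbr⟩ := exists_extends_cost_add_ne_eq_fitchCost (fun _ => ihr) c
    refine ⟨.node c a b, .node c ha hb, rfl, ?_⟩
    rw [← fitchCost_node_eq_of_mem hc, ← hal, ← hbr, LTree.cost]
    omega

end Hartigan

theorem stmt11_general {σ : Type} [DecidableEq σ] (t : BTree σ) :
    (∀ e : LTree σ, Extends e t → fitchM t ≤ e.cost) ∧
    (∃ e : LTree σ, Extends e t ∧ e.cost = fitchM t) ∧
    (∀ c : σ, c ∈ fitchF t ↔
      ∃ e : LTree σ, Extends e t ∧ e.rootChar = c ∧ e.cost = fitchM t) := by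
  refine ⟨fun e he => (fitchM_le_fitchCost t _).trans (fitchCost_le_cost he), ?_,
    fun c => ⟨exists_extends_rootChar_cost_eq_fitchM, ?_⟩⟩
  · obtain ⟨c, hc⟩ := fitchF_nonempty t
    obtain ⟨e, he, -, hcost⟩ := exists_extends_rootChar_cost_eq_fitchM hc
    exact ⟨e, he, hcost⟩
  · rintro ⟨e, he, rfl, hcost⟩
    exact fitchCost_eq_fitchM_iff.mp
      (le_antisymm (hcost ▸ fitchCost_le_cost he) (fitchM_le_fitchCost t _))

/-- Correctness of the single-site Fitch algorithm: `fitchM` at the root is the minimum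
number of character changes over all internal assignments, and `fitchF` at the root is
exactly the set of root characters achieving this minimum. -/
theorem stmt11 {σ : Type} [Fintype σ] [DecidableEq σ] (t : BTree σ) :
    (∀ e : LTree σ, Extends e t → fitchM t ≤ e.cost) ∧
    (∃ e : LTree σ, Extends e t ∧ e.cost = fitchM t) ∧
    (∀ c : σ, c ∈ fitchF t ↔
      ∃ e : LTree σ, Extends e t ∧ e.rootChar = c ∧ e.cost = fitchM t) :=
  stmt11_general t
end

section
/- Reward determined by root feature: for a fully built weighted rooted tree (z,b) on n leaves with m sites, the product over sites of the uniform-root-distribution inner product with the tree feature reproduces the reward: ∏_i (Σ_c π(c)·ρ_root^i[c]) = P(b) · P(Y|z,b) = R(z,b), where ρ is the Felsenstein feature scaled by branch-length priors as ρ^i = f_root^i · ∏_e P(b(e))^{1/m}. Consequently, if two forests share the same features and the same action sequence is applied to both until completion, the resulting trees have equal reward. -/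
/-!
The feature scales the root Felsenstein vector by `P(b)^{1/m}`, so its product over the `m`
sites restores the full prior `P(b)` and yields the reward. Since the `1/m`-th power splits
over the nonnegative factors of the prior, the feature of a joined tree is a function of the
features of its two children and the new branch lengths. Hence every join preserves
featurewise equality of two forests, the two completed trees have equal features, and so
equal rewards.
-/

inductive WTree (σ : Type) (m : ℕ) where
  | leaf : (Fin m → σ) → WTree σ m
  | node : WTree σ m → ℝ → WTree σ m → ℝ → WTree σ m

variable {σ : Type} [Fintype σ] [DecidableEq σ] {m : ℕ}

noncomputable def feln (Psub : ℝ → σ → σ → ℝ) : WTree σ m → Fin m → σ → ℝ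
  | .leaf y => fun i c => if y i = c then 1 else 0
  | .node l bl r br => fun i c =>
      (∑ k : σ, Psub bl c k * feln Psub l i k) * (∑ k : σ, Psub br c k * feln Psub r i k)

noncomputable def priorProd (Pb : ℝ → ℝ) : WTree σ m → ℝ
  | .leaf _ => 1
  | .node l bl r br => Pb bl * Pb br * priorProd Pb l * priorProd Pb r

/-- PhyloGFN tree feature: `ρ^i = f_root^i · (∏_e P(b(e)))^{1/m}`. -/
noncomputable def feat (Psub : ℝ → σ → σ → ℝ) (Pb : ℝ → ℝ) (t : WTree σ m) :
    Fin m → σ → ℝ :=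
  fun i c => feln Psub t i c * (priorProd Pb t) ^ ((1 : ℝ) / m)

/-- The reward of a weighted tree: `R(z,b) = P(b)·P(Y|z,b)` where the likelihood is the
product over sites of the uniform root distribution paired with the root Felsenstein
vector. -/
noncomputable def rewardW (Psub : ℝ → σ → σ → ℝ) (Pb : ℝ → ℝ) (t : WTree σ m) : ℝ :=
  priorProd Pb t * ∏ i : Fin m, ∑ c : σ, (1 / (Fintype.card σ : ℝ)) * feln Psub t i c

def joinAtW (s : List (WTree σ m)) (i j : ℕ) (bi bj : ℝ) :
    Option (List (WTree σ m)) :=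
  if i < j then
    match s[i]?, s[j]? with
    | some ti, some tj => some (((s.eraseIdx j).eraseIdx i) ++ [WTree.node ti bi tj bj])
    | _, _ => none
  else none

def applyJoinsW : List (ℕ × ℕ × ℝ × ℝ) → List (WTree σ m) → Option (List (WTree σ m))
  | [], s => some s
  | (i, j, bi, bj) :: rest, s =>
    match joinAtW s i j bi bj with
    | some s' => applyJoinsW rest s'
    | none => none

omit [Fintype σ] [DecidableEq σ] in
theorem priorProd_nonneg {Pb : ℝ → ℝ} (hPb : ∀ b, 0 ≤ Pb b) (t : WTree σ m) :
    0 ≤ priorProd Pb t := by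
  induction t with
  | leaf => exact zero_le_one
  | node l bl r br ihl ihr => unfold priorProd; have := hPb bl; have := hPb br; positivity

theorem prod_uniform_feat_eq_rewardW (hm : 1 ≤ m) (Psub : ℝ → σ → σ → ℝ) {Pb : ℝ → ℝ}
    (hPb : ∀ b, 0 ≤ Pb b) (t : WTree σ m) :
    ∏ i : Fin m, ∑ c : σ, (1 / (Fintype.card σ : ℝ)) * feat Psub Pb t i c =
      rewardW Psub Pb t := by
  simp only [feat, rewardW, ← mul_assoc, ← Finset.sum_mul, Finset.prod_mul_distrib,
    Finset.prod_const, Finset.card_univ, Fintype.card_fin, one_div (m : ℝ)]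
  rw [Real.rpow_inv_natCast_pow (priorProd_nonneg hPb t) (by omega), mul_comm]

theorem feat_node (Psub : ℝ → σ → σ → ℝ) {Pb : ℝ → ℝ} (hPb : ∀ b, 0 ≤ Pb b)
    (l r : WTree σ m) (bl br : ℝ) :
    feat Psub Pb (.node l bl r br) = fun i c =>
      (∑ k : σ, Psub bl c k * feat Psub Pb l i k) *
        (∑ k : σ, Psub br c k * feat Psub Pb r i k) * (Pb bl * Pb br) ^ ((1 : ℝ) / m) := by
  funext i c
  have hbr := mul_nonneg (hPb bl) (hPb br)
  simp only [feat, feln, priorProd, ← mul_assoc, ← Finset.sum_mul]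
  rw [Real.mul_rpow (mul_nonneg hbr (priorProd_nonneg hPb l)) (priorProd_nonneg hPb r),
    Real.mul_rpow hbr (priorProd_nonneg hPb l)]
  ring

theorem feat_node_congr (Psub : ℝ → σ → σ → ℝ) {Pb : ℝ → ℝ} (hPb : ∀ b, 0 ≤ Pb b)
    {l l' r r' : WTree σ m} (bl br : ℝ)
    (hl : feat Psub Pb l = feat Psub Pb l') (hr : feat Psub Pb r = feat Psub Pb r') :
    feat Psub Pb (.node l bl r br) = feat Psub Pb (.node l' bl r' br) := by
  rw [feat_node Psub hPb, feat_node Psub hPb, hl, hr]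

section JoinCongr

omit [Fintype σ] [DecidableEq σ]

variable {β : Type*} {f : WTree σ m → β}
  (hf : ∀ {l l' r r'} (bl br : ℝ), f l = f l' → f r = f r' →
    f (.node l bl r br) = f (.node l' bl r' br))
include hf

theorem map_eq_of_joinAtW_eq_some {s₁ s₂ s₁' s₂' : List (WTree σ m)} {i j : ℕ} {bi bj : ℝ}
    (hs : s₁.map f = s₂.map f) (h₁ : joinAtW s₁ i j bi bj = some s₁')
    (h₂ : joinAtW s₂ i j bi bj = some s₂') :
    s₁'.map f = s₂'.map f := by
  have hget (k : ℕ) : s₁[k]?.map f = s₂[k]?.map f := by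
    rw [← List.getElem?_map, ← List.getElem?_map, hs]
  unfold joinAtW at h₁ h₂
  split_ifs at h₁ h₂
  cases ht₁ : s₁[i]? <;> cases hu₁ : s₁[j]? <;> cases ht₂ : s₂[i]? <;> cases hu₂ : s₂[j]? <;>
    simp only [ht₁, hu₁, ht₂, hu₂, reduceCtorEq, Option.some.injEq] at h₁ h₂
  subst h₁ h₂
  have hti := hget i
  have htj := hget j
  simp only [ht₁, ht₂, hu₁, hu₂, Option.map_some, Option.some.injEq] at hti htj
  simp only [List.map_append, List.map_singleton, ← List.eraseIdx_map, hs, hf bi bj hti htj]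

theorem map_eq_of_applyJoinsW_eq_some (a : List (ℕ × ℕ × ℝ × ℝ))
    {s₁ s₂ o₁ o₂ : List (WTree σ m)} (hs : s₁.map f = s₂.map f)
    (h₁ : applyJoinsW a s₁ = some o₁) (h₂ : applyJoinsW a s₂ = some o₂) :
    o₁.map f = o₂.map f := by
  induction a generalizing s₁ s₂ with
  | nil =>
    rw [applyJoinsW, Option.some.injEq] at h₁ h₂
    rwa [← h₁, ← h₂]
  | cons act a ih =>
    obtain ⟨i, j, bi, bj⟩ := act
    unfold applyJoinsW at h₁ h₂
    cases hj₁ : joinAtW s₁ i j bi bj <;> cases hj₂ : joinAtW s₂ i j bi bj <;>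
      simp only [hj₁, hj₂, reduceCtorEq] at h₁ h₂
    exact ih (map_eq_of_joinAtW_eq_some hf hs hj₁ hj₂) h₁ h₂

end JoinCongr

/-- Reward is determined by the root feature: the product over sites of the uniform-root
inner product with the tree feature reproduces the reward `P(b)·P(Y|z,b)`; consequently,
two forests sharing the same features yield equal-reward trees under any common action
sequence applied until completion. -/
theorem stmt15 (hm : 1 ≤ m) (Psub : ℝ → σ → σ → ℝ) (Pb : ℝ → ℝ) (hPb : ∀ b, 0 ≤ Pb b) :
    (∀ t : WTree σ m,
      (∏ i : Fin m, ∑ c : σ, (1 / (Fintype.card σ : ℝ)) * feat Psub Pb t i c) =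
        rewardW Psub Pb t) ∧
    (∀ s₁ s₂ : List (WTree σ m), s₁.length = s₂.length →
      (∀ k : ℕ, (s₁[k]?).map (feat Psub Pb) = (s₂[k]?).map (feat Psub Pb)) →
      ∀ (a : List (ℕ × ℕ × ℝ × ℝ)) (x x' : WTree σ m),
        applyJoinsW a s₁ = some [x] → applyJoinsW a s₂ = some [x'] →
        rewardW Psub Pb x = rewardW Psub Pb x') := by
  refine ⟨prod_uniform_feat_eq_rewardW hm Psub hPb, ?_⟩
  intro s₁ s₂ _ hfeat a x x' h₁ h₂
  have hs : s₁.map (feat Psub Pb) = s₂.map (feat Psub Pb) :=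
    List.ext_getElem? fun k => by rw [List.getElem?_map, List.getElem?_map, hfeat k]
  have hx := map_eq_of_applyJoinsW_eq_some (feat_node_congr Psub hPb) a hs h₁ h₂
  simp only [List.map_singleton, List.cons.injEq, and_true] at hx
  rw [← prod_uniform_feat_eq_rewardW hm Psub hPb, hx, prod_uniform_feat_eq_rewardW hm Psub hPb]
end
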